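/- arXiv:2412.04265 — 7 statements merged into one kernel-verified Lean document; each statement's English description precedes it below -/
import Mathlib

section
/- If the untreated conditional mean function of the low-cutoff group is weakly increasing on the interval (l,h) and is dominated by the untreated conditional mean function of the high-cutoff group on (l,h), then for every point x̄ in (l,h), the treatment effect τ_l(x̄) = μ_{1,l}(x̄) − μ_{0,l}(x̄) satisfies μ_{1,l}(x̄) − μ_{0,h}(x̄) ≤ τ_l(x̄) ≤ μ_{1,l}(x̄) − μ_{0,l}(l). -/
open Set

/-- Theorem 1 (validity of the bounds): under monotonicity of the untreated
conditional mean of the low-cutoff group and dominance by the high-cutoff group,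
the treatment effect τ_l(xb) = μ₁ₗ(xb) − μ₀ₗ(xb) at any xb ∈ (l,h) lies in
[μ₁ₗ(xb)−μ₀ₕ(xb), μ₁ₗ(xb)−μ₀ₗ(l)]. -/
theorem bounds_on_extrapolated_RD_effects
    (l h : ℝ) (hlh : l < h)
    (μ0l μ1l μ0h : ℝ → ℝ)
    (hmono : MonotoneOn μ0l (Ico l h))
    (hdom : ∀ x ∈ Ioo l h, μ0l x ≤ μ0h x)
    (xb : ℝ) (hxb : xb ∈ Ioo l h) :
    μ1l xb - μ0h xb ≤ μ1l xb - μ0l xb ∧ μ1l xb - μ0l xb ≤ μ1l xb - μ0l l := by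
  obtain ⟨h1, h2⟩ := hxb
  constructor
  · linarith [hdom xb ⟨h1, h2⟩]
  · have := hmono ⟨le_refl l, hlh⟩ ⟨h1.le, h2⟩ h1.le
    linarith
end

section
/- Under monotonicity of μ_{0,l} and dominance μ_{0,l} ≤ μ_{0,h} on (l,h), the bounds [μ_{1,l}(x̄) − μ_{0,h}(x̄), μ_{1,l}(x̄) − μ_{0,l}(l)] on τ_l(x̄) are pointwise sharp: for any fixed x̄ ∈ (l,h) and any a ∈ [0,1], there exists a function μ̃_{0,l} : (l,h] → ℝ that is weakly increasing, satisfies μ̃_{0,l}(x) ≤ μ_{0,h}(x) on (l,h), agrees continuously with the boundary value μ_{0,l}(l) at l, and satisfies μ_{1,l}(x̄) − μ̃_{0,l}(x̄) = a·(μ_{1,l}(x̄) − μ_{0,h}(x̄)) + (1−a)·(μ_{1,l}(x̄) − μ_{0,l}(l)). -/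
open Set

/-- Pointwise sharpness of the bounds: every convex combination of the lower and
upper bound values is attained by some admissible counterfactual untreated mean
function (weakly increasing on (l,h], dominated by μ₀ₕ on (l,h), with right
limit μ₀ₗ(l) at l). -/
theorem bounds_pointwise_sharp
    (l h : ℝ) (hlh : l < h)
    (μ0l_l : ℝ)                 -- the boundary value μ_{0,l}(l)
    (μ1l μ0h : ℝ → ℝ)
    (hmono_h : MonotoneOn μ0h (Ioo l h))
    (hdom_l : ∀ x ∈ Ioo l h, μ0l_l ≤ μ0h x)
    (xb : ℝ) (hxb : xb ∈ Ioo l h)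
    (a : ℝ) (ha : a ∈ Icc (0 : ℝ) 1) :
    ∃ g : ℝ → ℝ,
      MonotoneOn g (Ioc l h) ∧
      (∀ x ∈ Ioo l h, g x ≤ μ0h x) ∧
      Filter.Tendsto g (nhdsWithin l (Ioi l)) (nhds μ0l_l) ∧
      μ1l xb - g xb = a * (μ1l xb - μ0h xb) + (1 - a) * (μ1l xb - μ0l_l) := by
  obtain ⟨hlxb, hxbh⟩ := hxb
  obtain ⟨ha0, ha1⟩ := ha
  set m : ℝ := a * μ0h xb + (1 - a) * μ0l_l with hm
  have hdxb : μ0l_l ≤ μ0h xb := hdom_l xb ⟨hlxb, hxbh⟩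
  have hm1 : μ0l_l ≤ m := by nlinarith
  have hm2 : m ≤ μ0h xb := by nlinarith
  have hxl : (0:ℝ) < xb - l := by linarith
  set c : ℝ := (m - μ0l_l) / (xb - l) with hc
  have hc0 : 0 ≤ c := div_nonneg (by linarith) hxl.le
  have hcx : c * (xb - l) = m - μ0l_l := div_mul_cancel₀ _ hxl.ne'
  set L : ℝ → ℝ := fun x => μ0l_l + c * (x - l) with hL
  have hLmono : Monotone L := by
    intro x y hxy
    simp only [hL]
    nlinarith
  have hLge : ∀ x, l ≤ x → μ0l_l ≤ L x := by
    intro x hx; simp only [hL]; nlinarith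
  have hLxb : L xb = m := by simp only [hL]; rw [hcx]; ring
  refine ⟨fun x => if x < xb then min (L x) (μ0h x) else m, ?_, ?_, ?_, ?_⟩
  · -- monotone
    intro x hx y hy hxy
    by_cases hxlt : x < xb
    · by_cases hylt : y < xb
      · simp only [if_pos hxlt, if_pos hylt]
        exact min_le_min (hLmono hxy)
          (hmono_h ⟨hx.1, hxlt.trans hxbh⟩ ⟨hy.1, hylt.trans hxbh⟩ hxy)
      · simp only [if_pos hxlt, if_neg hylt]
        calc min (L x) (μ0h x) ≤ L x := min_le_left _ _
          _ ≤ L xb := hLmono hxlt.le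
          _ = m := hLxb
    · have hy' : ¬ y < xb := fun hy' => hxlt (lt_of_le_of_lt hxy hy')
      simp [hxlt, hy']
  · -- dominated by μ0h
    intro x hx
    by_cases hxlt : x < xb
    · simp only [if_pos hxlt]; exact min_le_right _ _
    · simp only [if_neg hxlt]
      exact hm2.trans (hmono_h ⟨hlxb, hxbh⟩ hx (not_lt.mp hxlt))
  · -- right limit at l
    have hev : ∀ᶠ x in nhdsWithin l (Ioi l), x ∈ Ioo l xb :=
      Ioo_mem_nhdsGT_of_mem ⟨le_refl l, hlxb⟩
    have hLtend : Filter.Tendsto L (nhdsWithin l (Ioi l)) (nhds μ0l_l) := by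
      have hcont : Filter.Tendsto L (nhds l) (nhds (L l)) := by
        apply Continuous.tendsto
        simp only [hL]; continuity
      have hLl : L l = μ0l_l := by simp [hL]
      rw [hLl] at hcont
      exact hcont.mono_left nhdsWithin_le_nhds
    apply tendsto_of_tendsto_of_tendsto_of_le_of_le' (g := fun _ => μ0l_l) (h := L)
      tendsto_const_nhds hLtend
    · filter_upwards [hev] with x hx
      simp only [if_pos hx.2]
      exact le_min (hLge x hx.1.le) (hdom_l x ⟨hx.1, hx.2.trans hxbh⟩)
    · filter_upwards [hev] with x hx
      simp only [if_pos hx.2]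
      exact min_le_left _ _
  · -- value at xb
    simp only [lt_irrefl, if_false, hm]
    ring
end

section
/- If the reverse assumptions hold — μ_{0,l} and μ_{0,h} are weakly decreasing on (l,h) and μ_{0,l}(x) ≥ μ_{0,h}(x) on (l,h) — then for every x̄ ∈ (l,h), the treatment effect τ_l(x̄) satisfies μ_{1,l}(x̄) − μ_{0,l}(l) ≤ τ_l(x̄) ≤ μ_{1,l}(x̄) − μ_{0,h}(x̄). -/
open Set

/-- Corollary 1: under the reverse assumptions (μ₀ₗ weakly decreasing and
μ₀ₗ ≥ μ₀ₕ on (l,h)), the treatment effect τ_l(xb) = μ₁ₗ(xb) − μ₀ₗ(xb) satisfies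
μ₁ₗ(xb) − μ₀ₗ(l) ≤ τ_l(xb) ≤ μ₁ₗ(xb) − μ₀ₕ(xb) for every xb ∈ (l,h). -/
theorem bounds_reverse_assumptions
    (l h : ℝ) (hlh : l < h)
    (μ0l μ1l μ0h : ℝ → ℝ)
    (hanti : AntitoneOn μ0l (Ico l h))
    (hdom : ∀ x ∈ Ioo l h, μ0h x ≤ μ0l x)
    (xb : ℝ) (hxb : xb ∈ Ioo l h) :
    μ1l xb - μ0l l ≤ μ1l xb - μ0l xb ∧ μ1l xb - μ0l xb ≤ μ1l xb - μ0h xb := by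
  obtain ⟨h1, h2⟩ := hxb
  constructor
  · have := hanti ⟨le_refl l, hlh⟩ ⟨le_of_lt h1, h2⟩ (le_of_lt h1)
    linarith
  · have := hdom xb ⟨h1, h2⟩
    linarith
end

section
/- Fix a closed interval [l+ξ₁, h−ξ₂] ⊂ (l,h) with ξ₁, ξ₂ > 0. Suppose μ_{0,h} is weakly increasing on (l,h) and μ_{0,l}(l) ≤ μ_{0,h}(x) for all x ∈ (l,h). Then the function g(x) := min{ ((μ_{0,h}(l+ξ₁) − μ_{0,l}(l))/ξ₁)·(x−l) + μ_{0,l}(l), μ_{0,h}(x) } for l < x < l+ξ₁, and g(x) := μ_{0,h}(x) for x ≥ l+ξ₁, is weakly increasing on (l,h), satisfies g(x) ≤ μ_{0,h}(x) on (l,h), has right limit μ_{0,l}(l) at l, and equals μ_{0,h}(x) on [l+ξ₁, h−ξ₂]; hence the lower bound function μ_{1,l}(x) − μ_{0,h}(x) is attained uniformly on [l+ξ₁, h−ξ₂]. -/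
open Set

/-- The explicit construction attaining the lower bound uniformly on the closed
subinterval [l+ξ₁, h−ξ₂] ⊂ (l,h): the function g (linear-then-min below l+ξ₁,
equal to μ₀ₕ above) is weakly increasing, dominated by μ₀ₕ, has right limit
μ₀ₗ(l) at l, and equals μ₀ₕ on [l+ξ₁, h−ξ₂], so the treatment effects it
generates equal the lower bound μ₁ₗ(x) − μ₀ₕ(x) there. -/
theorem lower_bound_uniformly_attained
    (l h ξ₁ ξ₂ : ℝ) (hξ₁ : 0 < ξ₁) (hξ₂ : 0 < ξ₂) (hsub : l + ξ₁ < h - ξ₂)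
    (c : ℝ)                   -- the boundary value μ_{0,l}(l)
    (μ1l μ0h : ℝ → ℝ)
    (hmono_h : MonotoneOn μ0h (Ioo l h))
    (hcont_h : ContinuousOn μ0h (Ioo l h))
    (hdom : ∀ x ∈ Ioo l h, c ≤ μ0h x)
    (g : ℝ → ℝ)
    (hg : g = fun x =>
      if x < l + ξ₁ then
        min ((μ0h (l + ξ₁) - c) / ξ₁ * (x - l) + c) (μ0h x)
      else μ0h x) :
    MonotoneOn g (Ioo l h) ∧
    (∀ x ∈ Ioo l h, g x ≤ μ0h x) ∧
    Filter.Tendsto g (nhdsWithin l (Ioi l)) (nhds c) ∧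
    (∀ x ∈ Icc (l + ξ₁) (h - ξ₂), g x = μ0h x) ∧
    (∀ x ∈ Icc (l + ξ₁) (h - ξ₂), μ1l x - g x = μ1l x - μ0h x) := by
  subst hg
  have hmem1 : l + ξ₁ ∈ Ioo l h := ⟨by linarith, by linarith⟩
  have hslope : 0 ≤ (μ0h (l + ξ₁) - c) / ξ₁ :=
    div_nonneg (by linarith [hdom _ hmem1]) hξ₁.le
  -- domination
  have hdomg : ∀ x ∈ Ioo l h, (fun x =>
      if x < l + ξ₁ then
        min ((μ0h (l + ξ₁) - c) / ξ₁ * (x - l) + c) (μ0h x)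
      else μ0h x) x ≤ μ0h x := by
    intro x _
    by_cases hx : x < l + ξ₁
    · simp [hx]
    · simp [hx]
  refine ⟨?_, hdomg, ?_, ?_, ?_⟩
  · -- monotone
    intro x hx y hy hxy
    by_cases hx1 : x < l + ξ₁
    · by_cases hy1 : y < l + ξ₁
      · simp only [if_pos hx1, if_pos hy1]
        exact min_le_min (by nlinarith [mul_le_mul_of_nonneg_left hxy hslope])
          (hmono_h hx hy hxy)
      · simp only [if_pos hx1, if_neg hy1]
        exact le_trans (min_le_right _ _) (hmono_h hx hy hxy)
    · have hy1 : ¬ y < l + ξ₁ := fun hc => hx1 (lt_of_le_of_lt hxy hc)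
      simp only [if_neg hx1, if_neg hy1]
      exact hmono_h hx hy hxy
  · -- limit
    have hlin : Filter.Tendsto (fun x => (μ0h (l + ξ₁) - c) / ξ₁ * (x - l) + c)
        (nhdsWithin l (Ioi l)) (nhds c) := by
      have : Filter.Tendsto (fun x => (μ0h (l + ξ₁) - c) / ξ₁ * (x - l) + c)
          (nhds l) (nhds ((μ0h (l + ξ₁) - c) / ξ₁ * (l - l) + c)) := by
        exact (((continuous_id.sub continuous_const).const_smul ((μ0h (l + ξ₁) - c) / ξ₁)).add continuous_const).tendsto l
      simpa using this.mono_left nhdsWithin_le_nhds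
    have hlow : Filter.Tendsto (fun x => min ((μ0h (l + ξ₁) - c) / ξ₁ * (x - l) + c) c)
        (nhdsWithin l (Ioi l)) (nhds c) := by
      simpa using hlin.min (tendsto_const_nhds (x := c))
    have hev : ∀ᶠ x in nhdsWithin l (Ioi l), x ∈ Ioo l (l + ξ₁) := by
      apply Ioo_mem_nhdsGT_of_mem
      exact ⟨le_refl l, by linarith⟩
    refine tendsto_of_tendsto_of_tendsto_of_le_of_le' hlow hlin ?_ ?_
    · filter_upwards [hev] with x hx
      have hxh : x ∈ Ioo l h := ⟨hx.1, by linarith [hx.2]⟩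
      simp only [if_pos hx.2]
      exact min_le_min (le_refl _) (hdom _ hxh)
    · filter_upwards [hev] with x hx
      simp only [if_pos hx.2]
      exact min_le_left _ _
  · intro x hx
    simp [not_lt.mpr hx.1]
  · intro x hx
    simp [not_lt.mpr hx.1]
end

section
/- Suppose the score-noise density f is periodic with period h − l on the relevant interval, i.e., f(z) = f(z + h − l) for all z in [l − b, h − a] where a = inf over ε of s(e*(ε)) and b = sup over ε of s(e*(ε)). Then for every effort level e with s(e) ∈ [a,b], P(s(e) + η ≥ l) = P(s(e) + η ≥ h) + Q where Q = ∫_{l−b}^{h−b} f(z)dz is a constant not depending on e; consequently the decision problems under cutoffs l and h differ only by an additive constant β·τ̃·Q and hence have the same set of maximizers, so the optimal effort does not depend on the cutoff. -/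
open Set MeasureTheory

/-- If the score-noise density f is periodic with period h−l on [l−b, h−a]
(where [a,b] contains the achievable score levels s(e)), then the crossing
probabilities under the two cutoffs differ by the constant
Q = ∫_{l−b}^{h−b} f, hence the two decision problems differ by the additive
constant β·τ·Q and have the same maximizers: the optimal effort does not
depend on the cutoff. -/
theorem periodic_density_implies_cutoff_irrelevance
    (l h a b : ℝ) (hlh : l < h) (hab : a ≤ b)
    (u s y K : ℝ → ℝ) (β τ : ℝ)
    (f : ℝ → ℝ) (hf_nonneg : ∀ z, 0 ≤ f z) (hf_int : Integrable f)
    (hperiodic : ∀ z, z ∈ Icc (l - b) (h - a) → z + (h - l) ∈ Icc (l - b) (h - a) →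
      f z = f (z + (h - l)))
    (hrange : ∀ e : ℝ, s e ∈ Icc a b)
    (Φ : ℝ → ℝ → ℝ)
    (hΦ : Φ = fun C e => u (s e) - K e + β * (y e + τ * ∫ z in Ici (C - s e), f z)) :
    (∀ e : ℝ, (∫ z in Ici (l - s e), f z) =
        (∫ z in Ici (h - s e), f z) + ∫ z in Ioc (l - b) (h - b), f z) ∧
    (∀ e : ℝ, Φ l e = Φ h e + β * τ * ∫ z in Ioc (l - b) (h - b), f z) ∧
    {e : ℝ | ∀ e' : ℝ, Φ l e' ≤ Φ l e} = {e : ℝ | ∀ e' : ℝ, Φ h e' ≤ Φ h e} := by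
  have key : ∀ e : ℝ, (∫ z in Ici (l - s e), f z) =
      (∫ z in Ici (h - s e), f z) + ∫ z in Ioc (l - b) (h - b), f z := by
    intro e
    obtain ⟨hac, hcb⟩ := hrange e
    set c := s e with hc
    have h1 : l - b ≤ l - c := by linarith
    have h2 : l - c ≤ h - c := by linarith
    have h3 : h - b ≤ h - c := by linarith
    have h4 : l - b ≤ h - b := by linarith
    -- translation step
    have htrans : (∫ z in (h - b)..(h - c), f z) = ∫ z in (l - b)..(l - c), f z := by
      have := intervalIntegral.integral_comp_add_right (a := l - b) (b := l - c)
        (d := h - l) f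
      have heq : (∫ z in (l - b)..(l - c), f (z + (h - l)))
          = ∫ z in (l - b)..(l - c), f z := by
        apply intervalIntegral.integral_congr
        intro z hz
        rw [uIcc_of_le h1] at hz
        refine (hperiodic z ?_ ?_).symm
        · exact ⟨hz.1, by linarith [hz.2]⟩
        · constructor <;> [linarith [hz.1]; linarith [hz.2]]
      rw [heq] at this
      rw [show h - b = l - b + (h - l) by ring, show h - c = l - c + (h - l) by ring]
      exact this.symm
    have hII : ∀ x y : ℝ, IntervalIntegrable f volume x y :=
      fun x y => hf_int.intervalIntegrable
    -- split equality of Ioc integrals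
    have hIoc : (∫ z in Ioc (l - c) (h - c), f z) = ∫ z in Ioc (l - b) (h - b), f z := by
      rw [← intervalIntegral.integral_of_le h2, ← intervalIntegral.integral_of_le h4]
      have e1 : (∫ z in (l - b)..(h - b), f z)
          = (∫ z in (l - b)..(l - c), f z) + ∫ z in (l - c)..(h - b), f z :=
        (intervalIntegral.integral_add_adjacent_intervals (hII _ _) (hII _ _)).symm
      have e2 : (∫ z in (l - c)..(h - c), f z)
          = (∫ z in (l - c)..(h - b), f z) + ∫ z in (h - b)..(h - c), f z :=
        (intervalIntegral.integral_add_adjacent_intervals (hII _ _) (hII _ _)).symm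
      rw [e1, e2, htrans]; ring
    -- split Ici integral
    have hsplit : (∫ z in Ici (l - c), f z)
        = (∫ z in Ioc (l - c) (h - c), f z) + ∫ z in Ici (h - c), f z := by
      rw [integral_Ici_eq_integral_Ioi, integral_Ici_eq_integral_Ioi,
        ← Ioc_union_Ioi_eq_Ioi h2,
        setIntegral_union (Ioc_disjoint_Ioi le_rfl) measurableSet_Ioi
          (hf_int.integrableOn) (hf_int.integrableOn)]
    rw [hsplit, hIoc]; ring
  refine ⟨key, ?_, ?_⟩
  · intro e
    simp only [hΦ]
    rw [key e]; ring
  · have hconst : ∀ e : ℝ, Φ l e = Φ h e + β * τ * ∫ z in Ioc (l - b) (h - b), f z := by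
      intro e; simp only [hΦ]; rw [key e]; ring
    ext e
    simp only [mem_setOf_eq]
    constructor <;> intro H e' <;> have := H e' <;>
      rw [hconst e, hconst e'] at * <;> linarith
end

section
/- If the constant bias assumption holds (B(x) := μ_{0,h}(x) − μ_{0,l}(x) is constant on [l, h)), together with monotonicity of μ_{0,l} and dominance μ_{0,l} ≤ μ_{0,h} on (l,h), then the point-identified extrapolated effect τ_{l,CB}(x̄) = μ_{1,l}(x̄) − μ_{0,h}(x̄) + B(l) lies within the partial-identification bounds: μ_{1,l}(x̄) − μ_{0,h}(x̄) ≤ τ_{l,CB}(x̄) ≤ μ_{1,l}(x̄) − μ_{0,l}(l) for every x̄ ∈ (l,h). -/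
open Set

/-- Under the constant bias assumption (B(x) = μ₀ₕ(x) − μ₀ₗ(x) constant on
[l,h)), monotonicity of μ₀ₗ, and dominance μ₀ₗ ≤ μ₀ₕ on (l,h), the
point-identified extrapolated effect τ_{l,CB}(xb) = μ₁ₗ(xb) − μ₀ₕ(xb) + B(l)
lies within the partial-identification bounds. -/
theorem constant_bias_effect_within_bounds
    (l h : ℝ) (hlh : l < h)
    (μ0l μ1l μ0h : ℝ → ℝ)
    (hCB : ∀ x ∈ Ico l h, μ0h x - μ0l x = μ0h l - μ0l l)
    (hmono : MonotoneOn μ0l (Ico l h))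
    (hdom : ∀ x ∈ Ioo l h, μ0l x ≤ μ0h x)
    (xb : ℝ) (hxb : xb ∈ Ioo l h) :
    μ1l xb - μ0h xb ≤ μ1l xb - μ0h xb + (μ0h l - μ0l l) ∧
    μ1l xb - μ0h xb + (μ0h l - μ0l l) ≤ μ1l xb - μ0l l := by
  obtain ⟨h1, h2⟩ := hxb
  have hmem : xb ∈ Ico l h := ⟨le_of_lt h1, h2⟩
  have hcb := hCB xb hmem
  have hd := hdom xb ⟨h1, h2⟩
  have hm := hmono ⟨le_refl l, hlh⟩ hmem (le_of_lt h1)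
  constructor
  · linarith
  · linarith
end

section
/- With J+1 ordered cutoffs c₀ < c₁ < ⋯ < c_J and sequential dominance μ_{0,c₀}(x) ≤ μ_{0,c₁}(x) ≤ ⋯ ≤ μ_{0,c_J}(x) together with monotonicity of μ_{0,c₀}, for x̄ ∈ (c_{K−1}, c_K) the treatment effect τ_{c₀}(x̄) = μ_{1,c₀}(x̄) − μ_{0,c₀}(x̄) satisfies μ_{1,c₀}(x̄) − μ_{0,c_K}(x̄) ≤ τ_{c₀}(x̄) ≤ μ_{1,c₀}(x̄) − μ_{0,c₀}(c₀), and this lower bound is weakly tighter than (i.e., at least as large as) the two-cutoff lower bound μ_{1,c₀}(x̄) − μ_{0,c_J}(x̄) obtained using only the highest cutoff group. -/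
open Set

/-- Multiple cutoff points (Remark 3): with J+1 ordered cutoffs c₀ < ⋯ < c_J,
sequential dominance and monotonicity of μ_{0,c₀}, for xb ∈ (c_{K−1}, c_K) the
effect τ_{c₀}(xb) = μ₁(xb) − μ₀ 0 (xb) is bounded below by
μ₁(xb) − μ₀ K (xb) and above by μ₁(xb) − μ₀ 0 (c 0); moreover the lower bound
is weakly tighter than the two-cutoff lower bound μ₁(xb) − μ₀ J (xb). -/
theorem multi_cutoff_bounds
    (J : ℕ) (hJ : 1 ≤ J)
    (c : ℕ → ℝ) (hc : ∀ j, j < J → c j < c (j + 1))   -- ordered cutoffs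
    (μ0 : ℕ → ℝ → ℝ)      -- μ0 j = untreated conditional mean of group c_j
    (μ1 : ℝ → ℝ)          -- treated conditional mean of group c₀
    (hmono : MonotoneOn (μ0 0) (Ico (c 0) (c J)))
    (hdom : ∀ j, j < J → ∀ x ∈ Ioo (c 0) (c J), μ0 j x ≤ μ0 (j + 1) x)
    (K : ℕ) (hK1 : 1 ≤ K) (hKJ : K ≤ J)
    (xb : ℝ) (hxb : xb ∈ Ioo (c (K - 1)) (c K)) :
    (μ1 xb - μ0 K xb ≤ μ1 xb - μ0 0 xb ∧
      μ1 xb - μ0 0 xb ≤ μ1 xb - μ0 0 (c 0)) ∧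
    μ1 xb - μ0 J xb ≤ μ1 xb - μ0 K xb := by
  have hcm : ∀ i j : ℕ, i ≤ j → j ≤ J → c i ≤ c j := by
    intro i j hij hjJ
    induction j with
    | zero => simp [Nat.le_zero.mp hij]
    | succ n ih =>
      rcases Nat.lt_or_ge i (n + 1) with h | h
      · exact le_trans (ih (Nat.lt_succ_iff.mp h) (le_trans (Nat.le_succ n) hjJ))
          (le_of_lt (hc n (Nat.lt_of_succ_le hjJ)))
      · have : i = n + 1 := le_antisymm hij h
        simp [this]
  have hx0 : c 0 < xb := lt_of_le_of_lt (hcm 0 (K - 1) (Nat.zero_le _) (le_trans (Nat.sub_le _ _) hKJ)) hxb.1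
  have hxJ : xb < c J := lt_of_lt_of_le hxb.2 (hcm K J hKJ (le_refl _))
  have hxin : xb ∈ Ioo (c 0) (c J) := ⟨hx0, hxJ⟩
  have hchain : ∀ m n : ℕ, m ≤ n → n ≤ J → μ0 m xb ≤ μ0 n xb := by
    intro m n hmn hnJ
    induction n with
    | zero => simp [Nat.le_zero.mp hmn]
    | succ k ih =>
      rcases Nat.lt_or_ge m (k + 1) with h | h
      · exact le_trans (ih (Nat.lt_succ_iff.mp h) (le_trans (Nat.le_succ k) hnJ))
          (hdom k (Nat.lt_of_succ_le hnJ) xb hxin)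
      · have : m = k + 1 := le_antisymm hmn h
        simp [this]
  refine ⟨⟨?_, ?_⟩, ?_⟩
  · linarith [hchain 0 K (Nat.zero_le _) hKJ]
  · have h1 : c 0 ∈ Ico (c 0) (c J) :=
      ⟨le_refl _, lt_of_lt_of_le (hc 0 hJ) (hcm 1 J hJ (le_refl _))⟩
    have h2 : xb ∈ Ico (c 0) (c J) := ⟨le_of_lt hx0, hxJ⟩
    linarith [hmono h1 h2 (le_of_lt hx0)]
  · linarith [hchain K J hKJ (le_refl _)]
end
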